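/- arXiv:2202.05885 — 5 statements merged into one kernel-verified Lean document; each statement's English description precedes it below -/
import Mathlib

section
/- In any Markov-perfect equilibrium of the main model, for each fixed (z,k) the map b ↦ V(z,b,k) is strictly decreasing on [b̲(z,k), b̄(z,k)]; moreover V(z,b₂,k) − V(z,b₁,k) ≥ b₁ − b₂ for any b₁ > b₂ with b₁,b₂ ∈ [b̲(z,k), b̄(z,k)]. -/
open MeasureTheory Set

/-- The main trade-off model of defaultable corporate debt and investment:
production `F(z,k) = z A k^α`, tax rate `τ`, depreciation `δ`, risk-free rate `ρ`,
discount factor `β`, debt bounds `b̲ ≤ 0 ≤ b̄`, non-decreasing liquidation value `L`,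
and a time-homogeneous Markov shock on a bounded state space `Z ⊆ [0, z̄]` whose
transitions are given by the kernel `μ`. -/
structure TradeoffModel where
  A : ℝ
  α : ℝ
  τ : ℝ
  δ : ℝ
  ρ : ℝ
  β : ℝ
  bLow : ℝ
  bHigh : ℝ
  L : ℝ → ℝ
  zbar : ℝ
  Z : Set ℝ
  μ : ℝ → Measure ℝ
  hA : 0 < A
  hα : α ∈ Ioo (0 : ℝ) 1
  hτ : τ ∈ Ico (0 : ℝ) 1
  hδ : δ ∈ Ioo (0 : ℝ) 1
  hρ : ρ ∈ Ioo (0 : ℝ) 1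
  hβ : β ∈ Ioo (0 : ℝ) 1
  hbLow : bLow ≤ 0
  hbHigh : 0 ≤ bHigh
  hLmono : Monotone L
  hLnonneg : ∀ k, 0 ≤ L k
  hzbar : 0 < zbar
  hZ : Z ⊆ Icc 0 zbar
  hZne : Z.Nonempty
  hprob : ∀ z, IsProbabilityMeasure (μ z)
  hsupp : ∀ z, μ z Z = 1

namespace TradeoffModel

variable (M : TradeoffModel)

/-- Production function `F(z,k) = z A k^α`. -/
noncomputable def F (z k : ℝ) : ℝ := z * M.A * k ^ M.α

/-- Conditional expectation `E_z W(z', b', k')` of a next-period value. -/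
noncomputable def EV (W : ℝ → ℝ → ℝ → ℝ) (z b' k' : ℝ) : ℝ :=
  ∫ z', W z' b' k' ∂(M.μ z)

/-- Survival probability `P_z(W(z',b',k') > 0)`. -/
noncomputable def Psurv (W : ℝ → ℝ → ℝ → ℝ) (z b' k' : ℝ) : ℝ :=
  (M.μ z {z' | 0 < W z' b' k'}).toReal

/-- Default probability `P_z(W(z',b',k') = 0)`. -/
noncomputable def Pdef (W : ℝ → ℝ → ℝ → ℝ) (z b' k' : ℝ) : ℝ :=
  (M.μ z {z' | W z' b' k' = 0}).toReal

/-- Per-period net resources `R(z,k) = (1-τ)F(z,k) + [1-δ(1-τ)]k`. -/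
noncomputable def R (z k : ℝ) : ℝ :=
  (1 - M.τ) * M.F z k + (1 - M.δ * (1 - M.τ)) * k

/-- Maximal net debt revenue
`S(z,k) = sup {[τ+(1-τ)q(z,b',k')]b' - k' : b' ∈ [b̲,b̄], k' ≥ (1-δ)k}`. -/
noncomputable def S (q : ℝ → ℝ → ℝ → ℝ) (z k : ℝ) : ℝ :=
  sSup {s | ∃ b' k', b' ∈ Icc M.bLow M.bHigh ∧ (1 - M.δ) * k ≤ k' ∧
    s = (M.τ + (1 - M.τ) * q z b' k') * b' - k'}

/-- The feasible (non-default) states `X_feas`. -/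
def Feas (q : ℝ → ℝ → ℝ → ℝ) (x : ℝ × ℝ × ℝ) : Prop :=
  x.1 ∈ M.Z ∧ x.2.1 ∈ Icc M.bLow M.bHigh ∧ 0 ≤ x.2.2 ∧
    x.2.1 ≤ M.R x.1 x.2.2 + M.S q x.1 x.2.2

/-- Feasibility of a policy `p = (b', d, i)` at the state `x = (z, b, k)`,
given the price function `q`: debt bounds, nonnegative dividend and investment,
and the flow budget constraint with `k' = (1-δ)k + i`. -/
def PolicyFeasible (q : ℝ → ℝ → ℝ → ℝ) (x p : ℝ × ℝ × ℝ) : Prop :=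
  p.1 ∈ Icc M.bLow M.bHigh ∧ 0 ≤ p.2.1 ∧ 0 ≤ p.2.2 ∧
    (1 - M.τ) * M.F x.1 x.2.2 + M.τ * M.δ * x.2.2 +
      (M.τ + (1 - M.τ) * q x.1 p.1 ((1 - M.δ) * x.2.2 + p.2.2)) * p.1 - x.2.1
      = p.2.1 + p.2.2

/-- Payoff `d + β E_z V(z', b', k')` of policy `p = (b', d, i)` at state
`x = (z, b, k)` with continuation value `V`. -/
noncomputable def Payoff (V : ℝ → ℝ → ℝ → ℝ) (x p : ℝ × ℝ × ℝ) : ℝ :=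
  p.2.1 + M.β * M.EV V x.1 p.1 ((1 - M.δ) * x.2.2 + p.2.2)

/-- The firm's Bellman equation: at every feasible state the value is the supremum
of policy payoffs and the supremum is attained; at infeasible states the value is `0`. -/
def SatisfiesBellman (V q : ℝ → ℝ → ℝ → ℝ) : Prop :=
  ∀ x : ℝ × ℝ × ℝ,
    (M.Feas q x →
      V x.1 x.2.1 x.2.2 =
        sSup {v | ∃ p, M.PolicyFeasible q x p ∧ v = M.Payoff V x p} ∧
      ∃ p, M.PolicyFeasible q x p ∧ M.Payoff V x p = V x.1 x.2.1 x.2.2) ∧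
    (¬ M.Feas q x → V x.1 x.2.1 x.2.2 = 0)

/-- The investor break-even condition for the bond price `q`, given the value `V`. -/
def BreakEven (q V : ℝ → ℝ → ℝ → ℝ) : Prop :=
  ∀ z b' k',
    (b' ≤ 0 → q z b' k' = 1 / (1 + M.ρ)) ∧
    (0 < b' →
      q z b' k' =
        (b' * M.Psurv V z b' k' + M.L k' * M.Pdef V z b' k') / (b' * (1 + M.ρ)) ∧
      q z b' k' ≤ 1 / (1 + M.ρ))

/-- Boundedness of a function of three real variables. -/
def Bounded3 (f : ℝ → ℝ → ℝ → ℝ) : Prop := ∃ C, ∀ z b k, |f z b k| ≤ C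

/-- Measurability of a function of three real variables. -/
def Measurable3 (f : ℝ → ℝ → ℝ → ℝ) : Prop :=
  Measurable fun x : ℝ × ℝ × ℝ => f x.1 x.2.1 x.2.2

/-- A Markov-perfect equilibrium: a pair `(V, q)` of bounded measurable functions
such that `V` solves the Bellman equation (with attained suprema) given `q`, and
`q` satisfies the investor break-even condition given `V`. -/
def IsEquilibrium (V q : ℝ → ℝ → ℝ → ℝ) : Prop :=
  Bounded3 V ∧ Measurable3 V ∧ Bounded3 q ∧ Measurable3 q ∧
    M.SatisfiesBellman V q ∧ M.BreakEven q V

/-- Lowest feasible debt level `b̲(z,k) = inf {b ≥ b̲ : (z,b,k) ∈ X_feas}`. -/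
noncomputable def bLowFn (q : ℝ → ℝ → ℝ → ℝ) (z k : ℝ) : ℝ :=
  sInf {b | M.bLow ≤ b ∧ M.Feas q (z, b, k)}

/-- Highest feasible debt level `b̄(z,k) = sup {b ≤ b̄ : (z,b,k) ∈ X_feas}`. -/
noncomputable def bHighFn (q : ℝ → ℝ → ℝ → ℝ) (z k : ℝ) : ℝ :=
  sSup {b | b ≤ M.bHigh ∧ M.Feas q (z, b, k)}

/-- Dual objective
`G(z,k;b',d,i) = (1-τ)F(z,k) + τδk - d - i + τb' + ((1-τ)/(1+ρ))·[...]`,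
where the bracket is `b'` if `b' ≤ 0` and
`b'·P_z(W > 0) + L(k')·P_z(W = 0)` if `b' > 0`, with `k' = (1-δ)k + i`. -/
noncomputable def Gobj (W : ℝ → ℝ → ℝ → ℝ) (z k b' d i : ℝ) : ℝ :=
  (1 - M.τ) * M.F z k + M.τ * M.δ * k - d - i + M.τ * b' +
    (1 - M.τ) / (1 + M.ρ) *
      (if b' ≤ 0 then b'
       else b' * M.Psurv W z b' ((1 - M.δ) * k + i) +
         M.L ((1 - M.δ) * k + i) * M.Pdef W z b' ((1 - M.δ) * k + i))

/-- The dual value `B̂(z,k,v)`: the supremum of the dual objective over policies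
`(b',d,i)` satisfying the dual constraints. -/
noncomputable def Bhat (V : ℝ → ℝ → ℝ → ℝ) (z k v : ℝ) : ℝ :=
  sSup {b | ∃ b' d i : ℝ, b' ∈ Icc M.bLow M.bHigh ∧ 0 ≤ d ∧ 0 ≤ i ∧
    0 ≤ M.Gobj V z k b' d i ∧
    v = d + M.β * M.EV V z b' ((1 - M.δ) * k + i) ∧
    b = M.Gobj V z k b' d i}

/-- The dual operator `T`: `(Tf)(z,k,v)` is the supremum of the dual objective over
policies `(b',d,i)` and nonnegative auxiliary continuation functions `w`, subject to
the dual constraints and `b' ≤ f(z',k',w(z',b',k'))` for all `z'`. -/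
noncomputable def Tdual (f : ℝ → ℝ → ℝ → ℝ) (z k v : ℝ) : ℝ :=
  sSup {r | ∃ (b' d i : ℝ) (w : ℝ → ℝ → ℝ → ℝ),
    b' ∈ Icc M.bLow M.bHigh ∧ 0 ≤ d ∧ 0 ≤ i ∧
    (∀ z' b k, 0 ≤ w z' b k) ∧
    0 ≤ M.Gobj w z k b' d i ∧
    v = d + M.β * M.EV w z b' ((1 - M.δ) * k + i) ∧
    (∀ z', b' ≤ f z' ((1 - M.δ) * k + i) (w z' b' ((1 - M.δ) * k + i))) ∧
    r = M.Gobj w z k b' d i}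

/-- Maximal bond-issuing revenue `N(z,k') = max_{0 ≤ b' ≤ b̄} [τ+(1-τ)q(z,b',k')-β]b'`. -/
noncomputable def Nfun (q : ℝ → ℝ → ℝ → ℝ) (z k' : ℝ) : ℝ :=
  sSup {n | ∃ b' ∈ Icc (0 : ℝ) M.bHigh, n = (M.τ + (1 - M.τ) * q z b' k' - M.β) * b'}

end TradeoffModel

/-!
Debt enters the budget constraint only through the term `-b`. Hence, for `b₂ < b₁`, an optimal
policy at debt `b₁` with its dividend raised by `b₁ - b₂` is feasible at debt `b₂` and pays
exactly `b₁ - b₂` more, so `V(z,b₂,k) ≥ V(z,b₁,k) + (b₁ - b₂)`; boundedness of `V` and `q` keeps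
the payoffs bounded above, so the Bellman supremum does dominate this payoff. Feasibility is an
interval condition in `b`, so every `b` between `b̲(z,k)` and `b̄(z,k)` is feasible as soon as
some `b` is.
-/

namespace TradeoffModel

variable (M : TradeoffModel) {V q : ℝ → ℝ → ℝ → ℝ}

lemma abs_EV_le {C : ℝ} (hV : ∀ z b k, |V z b k| ≤ C) (z b' k' : ℝ) :
    |M.EV V z b' k'| ≤ C := by
  have := M.hprob z
  simpa [EV] using norm_integral_le_of_norm_le_const (μ := M.μ z)
    (f := fun z' => V z' b' k') (Filter.Eventually.of_forall fun z' => hV z' b' k')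

lemma debtRevenue_le {C : ℝ} (hq : ∀ z b k, |q z b k| ≤ C) {b' : ℝ}
    (hb' : b' ∈ Icc M.bLow M.bHigh) (z k' : ℝ) :
    (M.τ + (1 - M.τ) * q z b' k') * b' ≤ (1 + C) * (M.bHigh - M.bLow) := by
  obtain ⟨hτ0, hτ1⟩ := M.hτ
  have hprice : |M.τ + (1 - M.τ) * q z b' k'| ≤ 1 + C := by
    calc |M.τ + (1 - M.τ) * q z b' k'|
        ≤ |M.τ| + |1 - M.τ| * |q z b' k'| := by rw [← abs_mul]; exact abs_add_le _ _
      _ ≤ 1 + 1 * C := by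
          rw [abs_of_nonneg hτ0, abs_of_pos (sub_pos.2 hτ1)]
          gcongr
          · linarith
          · exact hq z b' k'
      _ = 1 + C := by ring
  have hdebt : |b'| ≤ M.bHigh - M.bLow :=
    abs_le.2 ⟨by linarith [hb'.1, M.hbHigh], by linarith [hb'.2, M.hbLow]⟩
  calc (M.τ + (1 - M.τ) * q z b' k') * b'
      ≤ |M.τ + (1 - M.τ) * q z b' k'| * |b'| := by rw [← abs_mul]; exact le_abs_self _
    _ ≤ (1 + C) * (M.bHigh - M.bLow) :=
        mul_le_mul hprice hdebt (abs_nonneg _) ((abs_nonneg _).trans hprice)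

lemma bddAbove_payoffs {Cv Cq : ℝ} (hV : ∀ z b k, |V z b k| ≤ Cv)
    (hq : ∀ z b k, |q z b k| ≤ Cq) (x : ℝ × ℝ × ℝ) :
    BddAbove {v | ∃ p, M.PolicyFeasible q x p ∧ v = M.Payoff V x p} := by
  refine ⟨(1 - M.τ) * M.F x.1 x.2.2 + M.τ * M.δ * x.2.2 + (1 + Cq) * (M.bHigh - M.bLow)
    - x.2.1 + M.β * Cv, ?_⟩
  rintro _ ⟨p, ⟨hb', -, hi, hbudget⟩, rfl⟩
  have hrevenue := M.debtRevenue_le hq hb' x.1 ((1 - M.δ) * x.2.2 + p.2.2)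
  have hcont : M.β * M.EV V x.1 p.1 ((1 - M.δ) * x.2.2 + p.2.2) ≤ M.β * Cv :=
    mul_le_mul_of_nonneg_left ((le_abs_self _).trans (M.abs_EV_le hV _ _ _)) M.hβ.1.le
  unfold Payoff
  linarith

lemma policyFeasible_add_dividend {z b₁ b₂ k : ℝ} {p : ℝ × ℝ × ℝ}
    (hp : M.PolicyFeasible q (z, b₁, k) p) (hb : b₂ ≤ b₁) :
    M.PolicyFeasible q (z, b₂, k) (p.1, p.2.1 + (b₁ - b₂), p.2.2) := by
  obtain ⟨hb', hd, hi, hbudget⟩ := hp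
  refine ⟨hb', ?_, hi, ?_⟩
  · dsimp only
    linarith
  · dsimp only at hbudget ⊢
    linarith

lemma payoff_add_dividend (x p : ℝ × ℝ × ℝ) (c : ℝ) :
    M.Payoff V x (p.1, p.2.1 + c, p.2.2) = M.Payoff V x p + c := by
  simp only [Payoff]
  ring

lemma sub_le_value_sub_value {Cv Cq : ℝ} (hV : ∀ z b k, |V z b k| ≤ Cv)
    (hq : ∀ z b k, |q z b k| ≤ Cq) (hB : M.SatisfiesBellman V q) {z b₁ b₂ k : ℝ}
    (h₁ : M.Feas q (z, b₁, k)) (h₂ : M.Feas q (z, b₂, k)) (hb : b₂ ≤ b₁) :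
    b₁ - b₂ ≤ V z b₂ k - V z b₁ k := by
  obtain ⟨-, p, hp, hpV⟩ := (hB (z, b₁, k)).1 h₁
  have hV₂ : V z b₂ k = sSup {v | ∃ p, M.PolicyFeasible q (z, b₂, k) p ∧
      v = M.Payoff V (z, b₂, k) p} := ((hB (z, b₂, k)).1 h₂).1
  have hle : V z b₁ k + (b₁ - b₂) ≤ V z b₂ k := by
    rw [hV₂]
    refine le_csSup (M.bddAbove_payoffs hV hq _)
      ⟨_, M.policyFeasible_add_dividend hp hb, ?_⟩
    rw [payoff_add_dividend, ← hpV]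
    rfl
  linarith

lemma exists_feas_of_bLowFn_lt_bHighFn {z k : ℝ} (h : M.bLowFn q z k < M.bHighFn q z k) :
    ∃ b, M.Feas q (z, b, k) := by
  -- Otherwise both `bLowFn` and `bHighFn` are the junk value `sInf ∅ = sSup ∅ = 0`.
  by_contra! hempty
  have hlow : {b | M.bLow ≤ b ∧ M.Feas q (z, b, k)} = ∅ :=
    eq_empty_of_forall_notMem fun b hb => hempty b hb.2
  have hhigh : {b | b ≤ M.bHigh ∧ M.Feas q (z, b, k)} = ∅ :=
    eq_empty_of_forall_notMem fun b hb => hempty b hb.2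
  simp [bLowFn, bHighFn, hlow, hhigh] at h

lemma feas_of_mem_Icc_bLowFn_bHighFn {z k b₀ b : ℝ} (h₀ : M.Feas q (z, b₀, k))
    (hb : b ∈ Icc (M.bLowFn q z k) (M.bHighFn q z k)) : M.Feas q (z, b, k) := by
  have hlow : M.bLow ≤ M.bLowFn q z k :=
    le_csInf ⟨b₀, h₀.2.1.1, h₀⟩ fun _ hb => hb.1
  have hne : {b | b ≤ M.bHigh ∧ M.Feas q (z, b, k)}.Nonempty := ⟨b₀, h₀.2.1.2, h₀⟩
  have hhigh : M.bHighFn q z k ≤ M.bHigh := csSup_le hne fun _ hb => hb.1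
  have hbudget : M.bHighFn q z k ≤ M.R z k + M.S q z k :=
    csSup_le hne fun _ hb => hb.2.2.2.2
  exact ⟨h₀.1, ⟨hlow.trans hb.1, hb.2.trans hhigh⟩, h₀.2.2.1, hb.2.trans hbudget⟩

end TradeoffModel

/-- In any Markov-perfect equilibrium, for each fixed `(z,k)` the map
`b ↦ V(z,b,k)` is strictly decreasing on `[b̲(z,k), b̄(z,k)]`, and moreover
`V(z,b₂,k) - V(z,b₁,k) ≥ b₁ - b₂` whenever `b₁ > b₂` in that interval. -/
theorem value_strictly_decreasing_in_debt (M : TradeoffModel)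
    (V q : ℝ → ℝ → ℝ → ℝ) (hEq : M.IsEquilibrium V q) (z k : ℝ) :
    StrictAntiOn (fun b => V z b k) (Set.Icc (M.bLowFn q z k) (M.bHighFn q z k)) ∧
    ∀ b₁ b₂ : ℝ, b₁ ∈ Set.Icc (M.bLowFn q z k) (M.bHighFn q z k) →
      b₂ ∈ Set.Icc (M.bLowFn q z k) (M.bHighFn q z k) → b₂ < b₁ →
      b₁ - b₂ ≤ V z b₂ k - V z b₁ k := by
  obtain ⟨⟨Cv, hV⟩, -, ⟨Cq, hq⟩, -, hB, -⟩ := hEq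
  have key : ∀ b₁ b₂ : ℝ, b₁ ∈ Set.Icc (M.bLowFn q z k) (M.bHighFn q z k) →
      b₂ ∈ Set.Icc (M.bLowFn q z k) (M.bHighFn q z k) → b₂ < b₁ →
      b₁ - b₂ ≤ V z b₂ k - V z b₁ k := by
    intro b₁ b₂ h₁ h₂ hlt
    obtain ⟨b₀, h₀⟩ := M.exists_feas_of_bLowFn_lt_bHighFn (h₂.1.trans_lt (hlt.trans_le h₁.2))
    exact M.sub_le_value_sub_value hV hq hB (M.feas_of_mem_Icc_bLowFn_bHighFn h₀ h₁)
      (M.feas_of_mem_Icc_bLowFn_bHighFn h₀ h₂) hlt.le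
  exact ⟨fun a ha b hb hab => by linarith [key b a hb ha hab], key⟩
end

section
/- Let τ∈[0,1), δ∈(0,1), ρ>0, z̄>0, A>0, α∈(0,1), b̄≥0, and set η₁=(1+ρτ)·b̄/(1+ρ). For every ε>0 there exists η>0 such that, defining φ₀(k)=[(1−τ)z̄A+τδ]·k+η, the following hold: (i) (1−τ)z̄A·k^α + τδ·k + η₁ ≤ φ₀(k) for every k ≥ 0; and (ii) φ₀((1−δ)k+i) ≤ (1+ε)·φ₀(k) for every k ≥ 0 and every i with 0 ≤ i ≤ (1−τ)z̄A·k^α + τδ·k + η₁. -/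
open Set

lemma sublinear_rpow (c γ α : ℝ) (hc : 0 ≤ c) (hγ : 0 < γ) (hα : α ∈ Ioo (0:ℝ) 1) :
    ∃ C : ℝ, 0 ≤ C ∧ ∀ k : ℝ, 0 ≤ k → c * k ^ α ≤ γ * k + C := by
  obtain ⟨hα0, hα1⟩ := hα
  set K : ℝ := max 1 ((c / γ) ^ (1 - α)⁻¹) with hK
  have hK1 : (1:ℝ) ≤ K := le_max_left _ _
  have hK0 : 0 ≤ K := by linarith
  refine ⟨c * K ^ α, mul_nonneg hc (Real.rpow_nonneg hK0 _), fun k hk => ?_⟩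
  rcases le_total k K with h | h
  · have : c * k ^ α ≤ c * K ^ α :=
      mul_le_mul_of_nonneg_left (Real.rpow_le_rpow hk h hα0.le) hc
    nlinarith [mul_nonneg hγ.le hk]
  · have hkpos : (0:ℝ) < k := lt_of_lt_of_le one_pos (hK1.trans h)
    have h1 : (c / γ) ≤ k ^ (1 - α) := by
      have h2 : ((c / γ) ^ (1 - α)⁻¹) ^ (1 - α) ≤ k ^ (1 - α) := by
        apply Real.rpow_le_rpow (Real.rpow_nonneg (div_nonneg hc hγ.le) _)
          (le_trans (le_max_right _ _) h) (by linarith)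
      rwa [Real.rpow_inv_rpow (div_nonneg hc hγ.le) (by linarith : (1:ℝ) - α ≠ 0)] at h2
    have h3 : c ≤ γ * k ^ (1 - α) := by
      rw [div_le_iff₀ hγ] at h1; linarith
    have h4 : c * k ^ α ≤ γ * k ^ (1 - α) * k ^ α :=
      mul_le_mul_of_nonneg_right h3 (Real.rpow_nonneg hkpos.le _)
    have h5 : k ^ (1 - α) * k ^ α = k := by
      rw [← Real.rpow_add hkpos]; simp
    have h6 : c * k ^ α ≤ γ * k := by
      calc c * k ^ α ≤ γ * k ^ (1 - α) * k ^ α := h4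
        _ = γ * (k ^ (1 - α) * k ^ α) := by ring
        _ = γ * k := by rw [h5]
    nlinarith [mul_nonneg hc (Real.rpow_nonneg hK0 α)]

/-- the weighting-function lemma (Lemma 3.5) in self-contained
analytic form.  With `η₁ = (1+ρτ)b̄/(1+ρ)`, for every `ε > 0` there is `η > 0`
such that, with `φ₀(k) = [(1-τ)z̄A + τδ]k + η`:
(i) `(1-τ)z̄A k^α + τδ k + η₁ ≤ φ₀(k)` for all `k ≥ 0`; and
(ii) `φ₀((1-δ)k + i) ≤ (1+ε)φ₀(k)` for all `k ≥ 0` and all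
`0 ≤ i ≤ (1-τ)z̄A k^α + τδ k + η₁`. -/
theorem weighting_function_lemma
    (τ δ ρ zbar A α bHigh : ℝ)
    (hτ : τ ∈ Ico (0 : ℝ) 1) (hδ : δ ∈ Ioo (0 : ℝ) 1) (hρ : 0 < ρ)
    (hz : 0 < zbar) (hA : 0 < A) (hα : α ∈ Ioo (0 : ℝ) 1) (hb : 0 ≤ bHigh) :
    ∀ ε : ℝ, 0 < ε → ∃ η : ℝ, 0 < η ∧
      (∀ k : ℝ, 0 ≤ k →
        (1 - τ) * zbar * A * k ^ α + τ * δ * k + (1 + ρ * τ) * bHigh / (1 + ρ)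
          ≤ ((1 - τ) * zbar * A + τ * δ) * k + η) ∧
      (∀ k i : ℝ, 0 ≤ k → 0 ≤ i →
        i ≤ (1 - τ) * zbar * A * k ^ α + τ * δ * k + (1 + ρ * τ) * bHigh / (1 + ρ) →
        ((1 - τ) * zbar * A + τ * δ) * ((1 - δ) * k + i) + η
          ≤ (1 + ε) * (((1 - τ) * zbar * A + τ * δ) * k + η)) := by
  intro ε hε
  obtain ⟨hτ0, hτ1⟩ := hτ
  obtain ⟨hδ0, hδ1⟩ := hδ
  obtain ⟨hα0, hα1⟩ := hα
  set c : ℝ := (1 - τ) * zbar * A with hc_def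
  set d : ℝ := τ * δ with hd_def
  have hc : 0 < c := by
    apply mul_pos (mul_pos (by linarith) hz) hA
  have hd : 0 ≤ d := mul_nonneg hτ0 hδ0.le
  have hdδ : d < δ := by
    have : τ * δ < 1 * δ := by nlinarith
    simpa using this
  set η₁ : ℝ := (1 + ρ * τ) * bHigh / (1 + ρ) with hη₁_def
  have hη₁ : 0 ≤ η₁ :=
    div_nonneg (mul_nonneg (by nlinarith) hb) (by linarith)
  obtain ⟨C₁, hC₁0, hC₁⟩ := sublinear_rpow c c α hc.le hc ⟨hα0, hα1⟩
  obtain ⟨C₂, hC₂0, hC₂⟩ := sublinear_rpow c (δ - d) α hc.le (by linarith) ⟨hα0, hα1⟩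
  refine ⟨η₁ + C₁ + (c + d) * (η₁ + C₂) / ε + 1, by positivity, ?_, ?_⟩
  · intro k hk
    have h1 := hC₁ k hk
    have h2 : 0 ≤ (c + d) * (η₁ + C₂) / ε := by positivity
    have : c * k ^ α + d * k + η₁ ≤ (c + d) * k + (η₁ + C₁ + (c + d) * (η₁ + C₂) / ε + 1) := by
      nlinarith
    simpa [hc_def, hd_def, hη₁_def] using this
  · intro k i hk hi hile
    have hile' : i ≤ c * k ^ α + d * k + η₁ := hile
    have h2 := hC₂ k hk
    have hi2 : i ≤ δ * k + C₂ + η₁ := by linarith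
    have hεη : (c + d) * (η₁ + C₂) ≤ ε * ((c + d) * (η₁ + C₂) / ε) := by
      rw [mul_div_cancel₀ _ hε.ne']
    set η : ℝ := η₁ + C₁ + (c + d) * (η₁ + C₂) / ε + 1 with hη_def
    have hη0 : 0 < η := by positivity
    have key : (c + d) * ((1 - δ) * k + i) + η ≤ (1 + ε) * ((c + d) * k + η) := by
      have hlhs : (c + d) * ((1 - δ) * k + i) ≤ (c + d) * (k + C₂ + η₁) := by
        apply mul_le_mul_of_nonneg_left _ (by linarith)
        nlinarith
      have hεη' : ε * ((c + d) * (η₁ + C₂) / ε) ≤ ε * η := by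
        apply mul_le_mul_of_nonneg_left _ hε.le
        nlinarith
      have expand : (1 + ε) * ((c + d) * k + η)
          = (c + d) * k + η + ε * ((c + d) * k) + ε * η := by ring
      have hA' : (c + d) * (k + C₂ + η₁) = (c + d) * k + (c + d) * (η₁ + C₂) := by ring
      have h0 : 0 ≤ ε * ((c + d) * k) :=
        mul_nonneg hε.le (mul_nonneg (by linarith) hk)
      rw [expand]
      linarith [hlhs, hεη.trans hεη', hA']
    simpa [hc_def, hd_def] using key
end

section
/- In the unique Markov-perfect equilibrium of the main model, the equilibrium bond price q(z,b',k') is non-increasing in the amount of debt issued b'. -/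
open MeasureTheory Set

namespace PriceAntitoneAux

open TradeoffModel

variable {M : TradeoffModel} {V q : ℝ → ℝ → ℝ → ℝ}

lemma slice_meas (hm : TradeoffModel.Measurable3 V) (b k : ℝ) :
    Measurable fun z' => V z' b k := by
  have h : Measurable fun z' : ℝ => (z', (b, k)) :=
    measurable_id.prodMk measurable_const
  exact hm.comp h

lemma integrable_slice (hm : TradeoffModel.Measurable3 V) {C : ℝ} (hC : ∀ z b k, |V z b k| ≤ C)
    (z b k : ℝ) : MeasureTheory.Integrable (fun z' => V z' b k) (M.μ z) := by
  haveI := M.hprob z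
  exact (MeasureTheory.integrable_const C).mono'
    (slice_meas hm b k).aestronglyMeasurable
    (Filter.Eventually.of_forall fun z' => by simpa using hC z' b k)

lemma EV_le (hm : TradeoffModel.Measurable3 V) {C : ℝ} (hC : ∀ z b k, |V z b k| ≤ C)
    (z b k : ℝ) : M.EV V z b k ≤ C := by
  haveI := M.hprob z
  have h := MeasureTheory.integral_mono (integrable_slice (M := M) hm hC z b k)
    (MeasureTheory.integrable_const C) (fun z' => (abs_le.mp (hC z' b k)).2)
  simpa [TradeoffModel.EV] using h

lemma le_EV (hm : TradeoffModel.Measurable3 V) {C : ℝ} (hC : ∀ z b k, |V z b k| ≤ C)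
    {c : ℝ} (hc : ∀ z b k, c ≤ V z b k) (z b k : ℝ) : c ≤ M.EV V z b k := by
  haveI := M.hprob z
  have h := MeasureTheory.integral_mono (MeasureTheory.integrable_const c)
    (integrable_slice (M := M) hm hC z b k) (fun z' => hc z' b k)
  simpa [TradeoffModel.EV] using h

lemma payoff_bddAbove (hEq : M.IsEquilibrium V q) (x : ℝ × ℝ × ℝ) :
    BddAbove {v | ∃ p, M.PolicyFeasible q x p ∧ v = M.Payoff V x p} := by
  obtain ⟨⟨C, hC⟩, hmV, ⟨Cq, hCq⟩, _, _, _⟩ := hEq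
  have hC0 : 0 ≤ C := le_trans (abs_nonneg _) (hC 0 0 0)
  have hCq0 : 0 ≤ Cq := le_trans (abs_nonneg _) (hCq 0 0 0)
  have hτ0 := M.hτ.1
  have hτ1 := M.hτ.2
  refine ⟨(1 - M.τ) * M.F x.1 x.2.2 + M.τ * M.δ * x.2.2 +
      (M.τ + (1 - M.τ) * Cq) * (|M.bLow| + |M.bHigh|) + |x.2.1| + M.β * C, ?_⟩
  rintro v ⟨p, ⟨hb', hd, hi, hbud⟩, rfl⟩
  have hEVle : M.EV V x.1 p.1 ((1 - M.δ) * x.2.2 + p.2.2) ≤ C := EV_le hmV hC _ _ _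
  have hβ0 : 0 ≤ M.β := M.hβ.1.le
  have hβEV : M.β * M.EV V x.1 p.1 ((1 - M.δ) * x.2.2 + p.2.2) ≤ M.β * C :=
    mul_le_mul_of_nonneg_left hEVle hβ0
  have habs : |p.1| ≤ |M.bLow| + |M.bHigh| := by
    rw [abs_le]
    constructor
    · have h1 := neg_abs_le M.bLow
      have h2 := abs_nonneg M.bHigh
      nlinarith [hb'.1]
    · have h1 := le_abs_self M.bHigh
      have h2 := abs_nonneg M.bLow
      nlinarith [hb'.2]
  have hQabs : |M.τ + (1 - M.τ) * q x.1 p.1 ((1 - M.δ) * x.2.2 + p.2.2)| ≤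
      M.τ + (1 - M.τ) * Cq := by
    refine le_trans (abs_add_le _ _) ?_
    rw [abs_of_nonneg hτ0, abs_mul, abs_of_nonneg (by linarith : (0:ℝ) ≤ 1 - M.τ)]
    have := hCq x.1 p.1 ((1 - M.δ) * x.2.2 + p.2.2)
    nlinarith
  have hQ : (M.τ + (1 - M.τ) * q x.1 p.1 ((1 - M.δ) * x.2.2 + p.2.2)) * p.1 ≤
      (M.τ + (1 - M.τ) * Cq) * (|M.bLow| + |M.bHigh|) := by
    calc (M.τ + (1 - M.τ) * q x.1 p.1 ((1 - M.δ) * x.2.2 + p.2.2)) * p.1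
        ≤ |(M.τ + (1 - M.τ) * q x.1 p.1 ((1 - M.δ) * x.2.2 + p.2.2)) * p.1| :=
          le_abs_self _
      _ = |M.τ + (1 - M.τ) * q x.1 p.1 ((1 - M.δ) * x.2.2 + p.2.2)| * |p.1| :=
          abs_mul _ _
      _ ≤ (M.τ + (1 - M.τ) * Cq) * (|M.bLow| + |M.bHigh|) :=
          mul_le_mul hQabs habs (abs_nonneg _) (by nlinarith)
  have hbabs : -x.2.1 ≤ |x.2.1| := neg_le_abs _
  unfold TradeoffModel.Payoff
  linarith

lemma V_nonneg (hEq : M.IsEquilibrium V q) : ∀ z b k, 0 ≤ V z b k := by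
  obtain ⟨⟨C, hC⟩, hmV, _, _, hBell, _⟩ := hEq
  have hC0 : 0 ≤ C := le_trans (abs_nonneg _) (hC 0 0 0)
  have hβ := M.hβ
  have key : ∀ n : ℕ, ∀ z b k, -(M.β ^ n * C) ≤ V z b k := by
    intro n
    induction n with
    | zero =>
      intro z b k
      have := (abs_le.mp (hC z b k)).1
      simpa using this
    | succ n ih =>
      intro z b k
      by_cases hf : M.Feas q (z, b, k)
      · obtain ⟨_, p, hp, hpay⟩ := (hBell (z, b, k)).1 hf
        have hEVge : -(M.β ^ n * C) ≤ M.EV V z p.1 ((1 - M.δ) * k + p.2.2) :=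
          le_EV hmV hC (fun z' b' k' => ih z' b' k') _ _ _
        have hd : 0 ≤ p.2.1 := hp.2.1
        have hpl : -(M.β ^ (n + 1) * C) ≤ M.Payoff V (z, b, k) p := by
          unfold TradeoffModel.Payoff
          have h2 : M.β * -(M.β ^ n * C) ≤
              M.β * M.EV V z p.1 ((1 - M.δ) * k + p.2.2) :=
            mul_le_mul_of_nonneg_left hEVge hβ.1.le
          have h3 : M.β ^ (n + 1) * C = M.β * (M.β ^ n * C) := by ring
          nlinarith
        calc -(M.β ^ (n + 1) * C) ≤ M.Payoff V (z, b, k) p := hpl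
          _ = V z b k := hpay
      · have h0 := (hBell (z, b, k)).2 hf
        simp only at h0
        rw [h0]
        have : 0 ≤ M.β ^ (n + 1) * C := mul_nonneg (pow_nonneg hβ.1.le _) hC0
        linarith
  intro z b k
  have htend : Filter.Tendsto (fun n : ℕ => -(M.β ^ n * C)) Filter.atTop (nhds 0) := by
    have h1 : Filter.Tendsto (fun n : ℕ => M.β ^ n) Filter.atTop (nhds 0) :=
      tendsto_pow_atTop_nhds_zero_of_lt_one hβ.1.le hβ.2
    have h2 := (h1.mul_const C).neg
    simpa using h2
  exact le_of_tendsto' htend (fun n => key n z b k)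

lemma V_anti (hEq : M.IsEquilibrium V q) {b1 b2 : ℝ} (h1 : M.bLow ≤ b1)
    (h12 : b1 ≤ b2) (z k : ℝ) : V z b2 k ≤ V z b1 k := by
  have hBell := hEq.2.2.2.2.1
  by_cases hf : M.Feas q (z, b2, k)
  · obtain ⟨hzZ, hbI, hk0, hRS⟩ := hf
    simp only at hzZ hbI hk0 hRS
    have hf1 : M.Feas q (z, b1, k) :=
      ⟨hzZ, ⟨h1, le_trans h12 hbI.2⟩, hk0, le_trans h12 hRS⟩
    obtain ⟨_, p, hp, hpay⟩ := (hBell (z, b2, k)).1 ⟨hzZ, hbI, hk0, hRS⟩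
    obtain ⟨hV1eq, _⟩ := (hBell (z, b1, k)).1 hf1
    have hp' : M.PolicyFeasible q (z, b1, k) (p.1, p.2.1 + (b2 - b1), p.2.2) := by
      obtain ⟨hb', hd, hi, hbud⟩ := hp
      refine ⟨hb', by simp; linarith, hi, ?_⟩
      simp only at hbud ⊢
      linarith
    have hmem : M.Payoff V (z, b1, k) (p.1, p.2.1 + (b2 - b1), p.2.2) ∈
        {v | ∃ p, M.PolicyFeasible q (z, b1, k) p ∧ v = M.Payoff V (z, b1, k) p} :=
      ⟨_, hp', rfl⟩
    have hle : M.Payoff V (z, b1, k) (p.1, p.2.1 + (b2 - b1), p.2.2) ≤ V z b1 k := by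
      simp only at hV1eq
      rw [hV1eq]
      exact le_csSup (payoff_bddAbove hEq _) hmem
    have hpay' : M.Payoff V (z, b1, k) (p.1, p.2.1 + (b2 - b1), p.2.2)
        = M.Payoff V (z, b2, k) p + (b2 - b1) := by
      unfold TradeoffModel.Payoff
      ring
    simp only at hpay
    rw [hpay', hpay] at hle
    linarith
  · have h0 := (hBell (z, b2, k)).2 hf
    simp only at h0
    rw [h0]
    exact V_nonneg hEq z b1 k

lemma surv_add_def (hEq : M.IsEquilibrium V q) (z b k : ℝ) :
    M.Psurv V z b k + M.Pdef V z b k = 1 := by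
  haveI := M.hprob z
  have hm : Measurable fun z' => V z' b k := slice_meas hEq.2.1 b k
  have hA : MeasurableSet {z' : ℝ | 0 < V z' b k} :=
    measurableSet_lt measurable_const hm
  have hB : MeasurableSet {z' : ℝ | V z' b k = 0} :=
    hm (measurableSet_singleton 0)
  have hdisj : Disjoint {z' : ℝ | 0 < V z' b k} {z' : ℝ | V z' b k = 0} := by
    rw [Set.disjoint_left]
    intro z' hz' hz''
    simp only [Set.mem_setOf_eq] at hz' hz''
    exact absurd hz'' (ne_of_gt hz')
  have hunion : {z' : ℝ | 0 < V z' b k} ∪ {z' : ℝ | V z' b k = 0} = Set.univ := by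
    ext z'
    simp only [Set.mem_union, Set.mem_setOf_eq, Set.mem_univ, iff_true]
    rcases (V_nonneg hEq z' b k).lt_or_eq with h | h
    · exact Or.inl h
    · exact Or.inr h.symm
  have hsum : M.μ z {z' : ℝ | 0 < V z' b k} + M.μ z {z' : ℝ | V z' b k = 0} = 1 := by
    rw [← MeasureTheory.measure_union hdisj hB, hunion]
    exact MeasureTheory.measure_univ
  have h1 : M.μ z {z' : ℝ | 0 < V z' b k} ≠ ⊤ := MeasureTheory.measure_ne_top _ _
  have h2 : M.μ z {z' : ℝ | V z' b k = 0} ≠ ⊤ := MeasureTheory.measure_ne_top _ _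
  unfold TradeoffModel.Psurv TradeoffModel.Pdef
  rw [← ENNReal.toReal_add h1 h2, hsum]
  simp

lemma Psurv_anti (hEq : M.IsEquilibrium V q) {a b : ℝ} (ha : M.bLow ≤ a)
    (hab : a ≤ b) (z k : ℝ) : M.Psurv V z b k ≤ M.Psurv V z a k := by
  haveI := M.hprob z
  have hsub : {z' : ℝ | 0 < V z' b k} ⊆ {z' : ℝ | 0 < V z' a k} := by
    intro z' hz'
    simp only [Set.mem_setOf_eq] at hz' ⊢
    exact lt_of_lt_of_le hz' (V_anti hEq ha hab z' k)
  exact ENNReal.toReal_mono (MeasureTheory.measure_ne_top _ _)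
    (MeasureTheory.measure_mono hsub)

end PriceAntitoneAux

/-- In the (unique) Markov-perfect equilibrium, the bond price
`q(z,b',k')` is non-increasing in the amount of debt issued `b'`. -/
theorem price_antitone_in_debt (M : TradeoffModel)
    (V q : ℝ → ℝ → ℝ → ℝ) (hEq : M.IsEquilibrium V q) (z k' : ℝ) :
    Antitone fun b' => q z b' k' := by
  have hBE := hEq.2.2.2.2.2
  have hρpos : (0:ℝ) < 1 + M.ρ := by have := M.hρ.1; linarith
  intro a b hab
  simp only
  by_cases hb : b ≤ 0
  · rw [(hBE z b k').1 hb, (hBE z a k').1 (le_trans hab hb)]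
  · push_neg at hb
    by_cases ha : a ≤ 0
    · rw [(hBE z a k').1 ha]
      exact ((hBE z b k').2 hb).2
    · push_neg at ha
      obtain ⟨hqb, hqble⟩ := (hBE z b k').2 hb
      obtain ⟨hqa, hqale⟩ := (hBE z a k').2 ha
      set s1 := M.Psurv V z a k' with hs1def
      set s2 := M.Psurv V z b k' with hs2def
      set d1 := M.Pdef V z a k' with hd1def
      set d2 := M.Pdef V z b k' with hd2def
      set L := M.L k' with hLdef
      have hsum1 : s1 + d1 = 1 := PriceAntitoneAux.surv_add_def hEq z a k'
      have hsum2 : s2 + d2 = 1 := PriceAntitoneAux.surv_add_def hEq z b k'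
      have hs21 : s2 ≤ s1 :=
        PriceAntitoneAux.Psurv_anti hEq (le_trans M.hbLow ha.le) hab z k'
      have hs1nn : 0 ≤ s1 := ENNReal.toReal_nonneg
      have hs2nn : 0 ≤ s2 := ENNReal.toReal_nonneg
      have hd1nn : 0 ≤ d1 := ENNReal.toReal_nonneg
      have hd2nn : 0 ≤ d2 := ENNReal.toReal_nonneg
      have hs1le : s1 ≤ 1 := by linarith
      have hL0 : 0 ≤ L := M.hLnonneg k'
      by_cases hLa : L ≤ a
      · rw [hqa, hqb]
        rw [div_le_div_iff₀ (by positivity) (by positivity)]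
        have key1 : 0 ≤ a * (b - L) * (s1 - s2) :=
          mul_nonneg (mul_nonneg ha.le (by linarith)) (by linarith)
        have key2 : 0 ≤ L * (b - a) * (1 - s1) :=
          mul_nonneg (mul_nonneg hL0 (by linarith)) (by linarith)
        have hd1' : d1 = 1 - s1 := by linarith
        have hd2' : d2 = 1 - s2 := by linarith
        rw [hd1', hd2']
        nlinarith [mul_nonneg (add_nonneg key1 key2) hρpos.le]
      · push_neg at hLa
        have hge : 1 / (1 + M.ρ) ≤ q z a k' := by
          rw [hqa, le_div_iff₀ (by positivity)]
          have hd1' : d1 = 1 - s1 := by linarith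
          rw [hd1']
          have key : 0 ≤ (L - a) * (1 - s1) :=
            mul_nonneg (by linarith) (by linarith)
          have heq : 1 / (1 + M.ρ) * (a * (1 + M.ρ)) = a := by field_simp
          nlinarith
        exact le_trans hqble hge
end

section
/- Let c > 0 and let h: ℝ → ℝ be non-increasing with 0 ≤ h(x) ≤ 1 for all x ≥ 0. Then for every b ∈ ℝ: (min{0,b} − min{0,b−c}) + (h(b)·max{0,b} − h(b−c)·max{0,b−c}) ≤ c. -/
/-- the key case-analysis inequality behind the discounting
property of the dual operator (Lemma 3.7): for `c > 0` and `h : ℝ → ℝ`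
non-increasing with `0 ≤ h(x) ≤ 1` for all `x ≥ 0`, for every `b`,
`(min{0,b} - min{0,b-c}) + (h(b)·max{0,b} - h(b-c)·max{0,b-c}) ≤ c`. -/
theorem discounting_case_inequality
    (c : ℝ) (hc : 0 < c) (h : ℝ → ℝ) (hmono : Antitone h)
    (hbd : ∀ x : ℝ, 0 ≤ x → 0 ≤ h x ∧ h x ≤ 1) :
    ∀ b : ℝ,
      (min 0 b - min 0 (b - c)) +
        (h b * max 0 b - h (b - c) * max 0 (b - c)) ≤ c := by
  intro b
  rcases le_or_gt b 0 with hb | hb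
  · rw [min_eq_right hb, min_eq_right (by linarith), max_eq_left hb,
      max_eq_left (by linarith)]
    ring_nf
    linarith
  · rcases le_or_gt b c with hbc | hbc
    · rw [min_eq_left hb.le, min_eq_right (by linarith), max_eq_right hb.le,
        max_eq_left (by linarith)]
      have := hbd b hb.le
      nlinarith
    · rw [min_eq_left hb.le, min_eq_left (by linarith), max_eq_right hb.le,
        max_eq_right (by linarith : (0:ℝ) ≤ b - c)]
      have h1 := hbd b hb.le
      have h2 := hbd (b - c) (by linarith)
      have h3 : h b ≤ h (b - c) := hmono (by linarith)
      nlinarith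
end

section
/- Failure of contraction for the primal Bellman operator: specialize the main model to a deterministic shock (Z = {z} a singleton), τ = 0, and liquidation value L(k) = 2ν√k, and define the primal operator S on bounded functions v of (b,k) by (Sv)(z,b,k) = sup{ d + β·v(z,b',k') } over b'∈[b̲,b̄], d≥0, i≥0 with zAk^α + q_v(b',k')·b' − b = d + i and k' = (1−δ)k + i, where q_v(b',k') = 1/(1+ρ) if b'≤0 and q_v(b',k') = ( b'·1{v(z,b',k')>0} + 2ν√k'·1{v(z,b',k')=0} )/( b'(1+ρ) ) if b'>0, and (Sv)(z,b,k) = 0 if the constraint set is empty. Then there exist parameters ν>0, ε>0, b̄>0 and a state (z,b,k) with (1−δ)k ≤ (ν/(1+ρ))² and zAk^α + (1−δ)k − b + (ν/(1+ρ))² > 0 such that, for the constant functions v₁ ≡ 0 and v₂ ≡ ε, one has (Sv₁)(z,b,k) = zAk^α + (1−δ)k − b + (ν/(1+ρ))², (Sv₂)(z,b,k) = zAk^α + (1−δ)k − b + βε + b̄/(1+ρ) − (1−δ)k, and (Sv₂)(z,b,k) − (Sv₁)(z,b,k) > ε = ‖v₂ − v₁‖_∞. Hence S is not a contraction in the uniform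 norm. -/
open Set

/-- Break-even bond price in the specialized model (deterministic shock, `τ = 0`,
liquidation value `L(k) = 2ν√k`) induced by a candidate value function `v` of
`(b, k)`: `q_v(b',k') = 1/(1+ρ)` if `b' ≤ 0`, and
`q_v(b',k') = (b'·1{v(b',k')>0} + 2ν√k'·1{v(b',k')=0})/(b'(1+ρ))` if `b' > 0`. -/
noncomputable def primalPrice (ρ ν : ℝ) (v : ℝ → ℝ → ℝ) (b' k' : ℝ) : ℝ :=
  if b' ≤ 0 then 1 / (1 + ρ)
  else ((if 0 < v b' k' then b' else 0) +
      (if v b' k' = 0 then 2 * ν * Real.sqrt k' else 0)) / (b' * (1 + ρ))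

/-- The primal Bellman operator `S` of the specialized model (deterministic shock
`z`, `τ = 0`, `L(k) = 2ν√k`): `(Sv)(z,b,k)` is the supremum of `d + β v(b',k')`
over `b' ∈ [b̲,b̄]`, `d ≥ 0`, `i ≥ 0` with budget
`zAk^α + q_v(b',k')·b' - b = d + i` and `k' = (1-δ)k + i`.  (In `ℝ`, the
supremum of the empty set is `0`, matching the convention `Sv = 0` when the
constraint set is empty.) -/
noncomputable def primalOp (A α δ ρ β bLow bHigh ν z : ℝ)
    (v : ℝ → ℝ → ℝ) (b k : ℝ) : ℝ :=
  sSup {r | ∃ b' d i : ℝ, bLow ≤ b' ∧ b' ≤ bHigh ∧ 0 ≤ d ∧ 0 ≤ i ∧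
    z * A * k ^ α + primalPrice ρ ν v b' ((1 - δ) * k + i) * b' - b = d + i ∧
    r = d + β * v b' ((1 - δ) * k + i)}

section PrimalPrice

variable {ρ ν : ℝ} {v : ℝ → ℝ → ℝ} {b' k' : ℝ}

theorem primalPrice_mul_of_nonpos (hb' : b' ≤ 0) :
    primalPrice ρ ν v b' k' * b' = b' / (1 + ρ) := by
  rw [primalPrice, if_pos hb', one_div_mul_eq_div]

theorem primalPrice_mul_of_value_pos (hb' : 0 < b') (hv : 0 < v b' k') :
    primalPrice ρ ν v b' k' * b' = b' / (1 + ρ) := by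
  rw [primalPrice, if_neg hb'.not_ge, if_pos hv, if_neg hv.ne', add_zero]
  field_simp

theorem primalPrice_mul_of_value_eq_zero (hb' : 0 < b') (hv : v b' k' = 0) :
    primalPrice ρ ν v b' k' * b' = 2 * (ν / (1 + ρ)) * √k' := by
  rw [primalPrice, if_neg hb'.not_ge, hv, if_neg (lt_irrefl 0), if_pos rfl, zero_add]
  field_simp

end PrimalPrice

theorem two_mul_mul_sqrt_sub_le_sq (a : ℝ) {x : ℝ} (hx : 0 ≤ x) : 2 * a * √x - x ≤ a ^ 2 := by
  nlinarith [sq_nonneg (√x - a), Real.sq_sqrt hx]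

section PrimalOp

variable {A α δ ρ β bLow bHigh ν z b k : ℝ}

/-- Against `v ≡ 0` every loan is priced at its liquidation value, so the firm invests up to
`k' = (ν/(1+ρ))²`, where the marginal liquidation value `ν/((1+ρ)√k')` of capital is one. -/
theorem primalOp_zero (hρ : 0 ≤ 1 + ρ) (hν : 0 ≤ ν) (hbLow : bLow ≤ bHigh) (hbHigh : 0 < bHigh)
    (hk₀ : 0 ≤ (1 - δ) * k) (hk : (1 - δ) * k ≤ (ν / (1 + ρ)) ^ 2)
    (hd : 0 ≤ z * A * k ^ α + (1 - δ) * k - b + (ν / (1 + ρ)) ^ 2) :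
    primalOp A α δ ρ β bLow bHigh ν z (fun _ _ => 0) b k
      = z * A * k ^ α + (1 - δ) * k - b + (ν / (1 + ρ)) ^ 2 := by
  set m := ν / (1 + ρ)
  refine IsGreatest.csSup_eq ⟨?_, ?_⟩
  · refine ⟨bHigh, _, m ^ 2 - (1 - δ) * k, hbLow, le_rfl, hd, by linarith, ?_, by ring⟩
    have hm : 0 ≤ m := div_nonneg hν hρ
    rw [primalPrice_mul_of_value_eq_zero hbHigh rfl, add_sub_cancel, Real.sqrt_sq hm]
    ring
  · rintro r ⟨b', d, i, -, -, -, hi, hbudget, rfl⟩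
    rcases le_or_gt b' 0 with hb' | hb'
    · rw [primalPrice_mul_of_nonpos hb'] at hbudget
      have : b' / (1 + ρ) ≤ 0 := div_nonpos_of_nonpos_of_nonneg hb' hρ
      nlinarith [sq_nonneg m]
    · rw [primalPrice_mul_of_value_eq_zero hb' rfl] at hbudget
      have := two_mul_mul_sqrt_sub_le_sq m (add_nonneg hk₀ hi)
      linarith

/-- Against a positive constant `v ≡ ε` every loan is priced as riskless, so the firm borrows
the maximum `b̄` and invests nothing. -/
theorem primalOp_const_of_pos {ε : ℝ} (hε : 0 < ε) (hρ : 0 ≤ 1 + ρ) (hbLow : bLow ≤ bHigh)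
    (hbHigh : 0 < bHigh) (hd : 0 ≤ z * A * k ^ α - b + bHigh / (1 + ρ)) :
    primalOp A α δ ρ β bLow bHigh ν z (fun _ _ => ε) b k
      = z * A * k ^ α - b + bHigh / (1 + ρ) + β * ε := by
  refine IsGreatest.csSup_eq ⟨?_, ?_⟩
  · refine ⟨bHigh, _, 0, hbLow, le_rfl, hd, le_rfl, ?_, rfl⟩
    rw [primalPrice_mul_of_value_pos hbHigh hε]
    ring
  · rintro r ⟨b', d, i, -, hb'High, -, hi, hbudget, rfl⟩
    have hq : primalPrice ρ ν (fun _ _ => ε) b' ((1 - δ) * k + i) * b' ≤ bHigh / (1 + ρ) := by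
      rcases le_or_gt b' 0 with hb' | hb'
      · rw [primalPrice_mul_of_nonpos hb']
        exact (div_nonpos_of_nonpos_of_nonneg hb' hρ).trans (div_nonneg hbHigh.le hρ)
      · rw [primalPrice_mul_of_value_pos hb' hε]
        exact div_le_div_of_nonneg_right hb'High hρ
    linarith

end PrimalOp

theorem primal_operator_not_contraction_general
    (A α δ ρ β bLow : ℝ) (hA : 0 < A)
    (hδ : δ ∈ Ioo (0 : ℝ) 1) (hρ : ρ ∈ Ioo (0 : ℝ) 1) (hβ : β ∈ Ioo (0 : ℝ) 1)
    (hbLow : bLow ≤ 0) :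
    ∃ ν : ℝ, 0 < ν ∧ ∃ ε : ℝ, 0 < ε ∧ ∃ bHigh : ℝ, 0 < bHigh ∧
      ∃ z b k : ℝ,
        (1 - δ) * k ≤ (ν / (1 + ρ)) ^ 2 ∧
        0 < z * A * k ^ α + (1 - δ) * k - b + (ν / (1 + ρ)) ^ 2 ∧
        primalOp A α δ ρ β bLow bHigh ν z (fun _ _ => 0) b k
          = z * A * k ^ α + (1 - δ) * k - b + (ν / (1 + ρ)) ^ 2 ∧
        primalOp A α δ ρ β bLow bHigh ν z (fun _ _ => ε) b k
          = z * A * k ^ α + (1 - δ) * k - b + β * ε + bHigh / (1 + ρ) - (1 - δ) * k ∧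
        ε < primalOp A α δ ρ β bLow bHigh ν z (fun _ _ => ε) b k
            - primalOp A α δ ρ β bLow bHigh ν z (fun _ _ => 0) b k := by
  -- `ν = 1 + ρ` puts the liquidation optimum at `k' = 1`, and `b̄ = 3(1 + ρ)` makes the
  -- riskless borrowing worth `3`; the state is `z = k = 1`, `b = 0`.
  obtain ⟨hδ₀, hδ₁⟩ := hδ
  have hρ' : 0 < 1 + ρ := by linarith [hρ.1]
  have hν : (1 + ρ) / (1 + ρ) = 1 := div_self hρ'.ne'
  have hbHigh : 3 * (1 + ρ) / (1 + ρ) = 3 := by field_simp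
  have hbLow' : bLow ≤ 3 * (1 + ρ) := by linarith
  have hS₀ := primalOp_zero (A := A) (α := α) (β := β) (z := 1) (b := 0) (k := 1)
    hρ'.le hρ'.le hbLow' (by positivity) (by linarith : 0 ≤ (1 - δ) * 1)
    (by rw [hν]; linarith) (by rw [hν, Real.one_rpow]; linarith)
  have hS₁ := primalOp_const_of_pos (A := A) (α := α) (δ := δ) (β := β) (ν := 1 + ρ)
    (z := 1) (b := 0) (k := 1) one_pos hρ'.le hbLow' (by positivity)
    (by rw [hbHigh, Real.one_rpow]; linarith)
  refine ⟨1 + ρ, hρ', 1, one_pos, 3 * (1 + ρ), by positivity, 1, 0, 1, ?_, ?_, hS₀, ?_, ?_⟩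
  · rw [hν]; linarith
  · rw [hν, Real.one_rpow]; linarith
  · rw [hS₁]; ring
  · rw [hS₀, hS₁, hν, hbHigh]; linarith [hβ.1]

/-- failure of contraction for the primal Bellman operator.  In the
specialized model there exist `ν > 0`, `ε > 0`, `b̄ > 0` and a state `(z,b,k)`
with `(1-δ)k ≤ (ν/(1+ρ))²` and `zAk^α + (1-δ)k - b + (ν/(1+ρ))² > 0` such that,
for the constant functions `v₁ ≡ 0` and `v₂ ≡ ε`,
`(Sv₁)(z,b,k) = zAk^α + (1-δ)k - b + (ν/(1+ρ))²`,
`(Sv₂)(z,b,k) = zAk^α + (1-δ)k - b + βε + b̄/(1+ρ) - (1-δ)k`, and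
`(Sv₂)(z,b,k) - (Sv₁)(z,b,k) > ε = ‖v₂ - v₁‖_∞`; hence `S` is not a contraction
in the uniform norm. -/
theorem primal_operator_not_contraction
    (A α δ ρ β bLow : ℝ) (hA : 0 < A) (hα : α ∈ Ioo (0 : ℝ) 1)
    (hδ : δ ∈ Ioo (0 : ℝ) 1) (hρ : ρ ∈ Ioo (0 : ℝ) 1) (hβ : β ∈ Ioo (0 : ℝ) 1)
    (hbLow : bLow ≤ 0) :
    ∃ ν : ℝ, 0 < ν ∧ ∃ ε : ℝ, 0 < ε ∧ ∃ bHigh : ℝ, 0 < bHigh ∧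
      ∃ z b k : ℝ,
        (1 - δ) * k ≤ (ν / (1 + ρ)) ^ 2 ∧
        0 < z * A * k ^ α + (1 - δ) * k - b + (ν / (1 + ρ)) ^ 2 ∧
        primalOp A α δ ρ β bLow bHigh ν z (fun _ _ => 0) b k
          = z * A * k ^ α + (1 - δ) * k - b + (ν / (1 + ρ)) ^ 2 ∧
        primalOp A α δ ρ β bLow bHigh ν z (fun _ _ => ε) b k
          = z * A * k ^ α + (1 - δ) * k - b + β * ε + bHigh / (1 + ρ) - (1 - δ) * k ∧
        ε < primalOp A α δ ρ β bLow bHigh ν z (fun _ _ => ε) b k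
            - primalOp A α δ ρ β bLow bHigh ν z (fun _ _ => 0) b k :=
  primal_operator_not_contraction_general A α δ ρ β bLow hA hδ hρ hβ hbLow
end
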